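/- arXiv:2006.07458 — 3 statements merged into one kernel-verified Lean document; each statement's English description precedes it below -/
import Mathlib

section
/- The function f(U) = min over transportation plans π ∈ Π(μ,ν) of Trace(Uᵀ V_π U) is 2‖C‖_∞-weakly concave on ℝ^{d×k}; that is, U ↦ f(U) - ‖C‖_∞ ‖U‖_F² is concave. -/
/-!
For a plan `π`, the map `U ↦ tr(Uᵀ V_π U) - ‖C‖_∞ ‖U‖_F²` equals `-tr(Uᵀ (‖C‖_∞ I - V_π) U)`.
Since `V_π` is an average of the rank-one matrices `v vᵀ` with `v = x_i - y_j` and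
`‖v‖² ≤ ‖C‖_∞`, the matrix `‖C‖_∞ I - V_π` is positive semidefinite, so this map is concave.
`f - ‖C‖_∞ ‖·‖_F²` is the pointwise infimum of these concave maps over all plans, hence concave.
-/

open Finset Matrix

theorem concaveOn_of_isGLB {𝕜 E β ι : Type*} [Semiring 𝕜] [PartialOrder 𝕜]
    [AddCommMonoid E] [SMul 𝕜 E] [AddCommMonoid β] [PartialOrder β] [IsOrderedAddMonoid β]
    [Module 𝕜 β] [PosSMulMono 𝕜 β] {s : Set E} {S : Set ι} {F : ι → E → β} {φ : E → β}
    (hs : Convex 𝕜 s) (hF : ∀ i ∈ S, ConcaveOn 𝕜 s (F i))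
    (hφ : ∀ x ∈ s, IsGLB ((F · x) '' S) (φ x)) : ConcaveOn 𝕜 s φ := by
  refine ⟨hs, fun x hx y hy a b ha hb hab => (hφ _ (hs hx hy ha hb hab)).2 ?_⟩
  rintro _ ⟨i, hi, rfl⟩
  calc a • φ x + b • φ y ≤ a • F i x + b • F i y := by
        gcongr
        · exact (hφ x hx).1 ⟨i, hi, rfl⟩
        · exact (hφ y hy).1 ⟨i, hi, rfl⟩
    _ ≤ F i (a • x + b • y) := (hF i hi).2 hx hy ha hb hab

section TraceForm

variable {m k : Type*} [Fintype m] [Fintype k]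

theorem trace_transpose_mul_self_eq_sum_sq (U : Matrix m k ℝ) :
    trace (Uᵀ * U) = ∑ a, ∑ b, U a b ^ 2 := by
  simp only [trace, Matrix.diag, mul_apply, transpose_apply, sq]
  exact Finset.sum_comm

theorem trace_transpose_mul_smul_one_sub_mul [DecidableEq m] (C : ℝ) (M : Matrix m m ℝ)
    (U : Matrix m k ℝ) :
    trace (Uᵀ * (C • 1 - M) * U) = C * ∑ a, ∑ b, U a b ^ 2 - trace (Uᵀ * M * U) := by
  simp only [Matrix.mul_sub, Matrix.sub_mul, Matrix.mul_smul, Matrix.smul_mul, Matrix.mul_one,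
    trace_sub, trace_smul, trace_transpose_mul_self_eq_sum_sq, smul_eq_mul]

theorem trace_transpose_mul_mul_nonneg {M : Matrix m m ℝ} (hM : M.PosSemidef)
    (U : Matrix m k ℝ) : 0 ≤ trace (Uᵀ * M * U) := by
  simpa using (hM.conjTranspose_mul_mul_same U).trace_nonneg

theorem trace_transpose_mul_mul_add (M : Matrix m m ℝ) (U V : Matrix m k ℝ) {a b : ℝ}
    (hab : a + b = 1) :
    trace ((a • U + b • V)ᵀ * M * (a • U + b • V)) =
      a * trace (Uᵀ * M * U) + b * trace (Vᵀ * M * V) -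
        a * b * trace ((U - V)ᵀ * M * (U - V)) := by
  simp only [transpose_add, transpose_sub, transpose_smul, Matrix.add_mul, Matrix.mul_add,
    Matrix.sub_mul, Matrix.mul_sub, Matrix.smul_mul, Matrix.mul_smul, trace_add, trace_sub,
    trace_smul, smul_eq_mul]
  linear_combination (a * trace (Uᵀ * M * U) + b * trace (Vᵀ * M * V)) * hab

theorem convexOn_trace_transpose_mul_mul {M : Matrix m m ℝ} (hM : M.PosSemidef) :
    ConvexOn ℝ Set.univ (fun U : Matrix m k ℝ => trace (Uᵀ * M * U)) := by
  refine ⟨convex_univ, fun U _ V _ a b ha hb hab => ?_⟩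
  have hUV := trace_transpose_mul_mul_nonneg hM (U - V)
  simp only [smul_eq_mul, trace_transpose_mul_mul_add M U V hab]
  nlinarith [mul_nonneg (mul_nonneg ha hb) hUV]

end TraceForm

section OuterProducts

variable {ι κ n : Type*} [Fintype ι] [Fintype κ] [Fintype n]

theorem posSemidef_vecMulVec_self (v : n → ℝ) : (vecMulVec v v).PosSemidef := by
  simpa using posSemidef_vecMulVec_self_star v

theorem posSemidef_smul_one_sub_vecMulVec_self [DecidableEq n] {v : n → ℝ} {C : ℝ}
    (hv : v ⬝ᵥ v ≤ C) : (C • 1 - vecMulVec v v).PosSemidef := by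
  refine .of_dotProduct_mulVec_nonneg
    ((isHermitian_one.smul (.all C)).sub (posSemidef_vecMulVec_self v).isHermitian) fun x => ?_
  have hCS : (v ⬝ᵥ x) ^ 2 ≤ (v ⬝ᵥ v) * (x ⬝ᵥ x) := by
    simpa only [dotProduct, sq] using Finset.sum_mul_sq_le_sq_mul_sq univ v x
  have hx : 0 ≤ x ⬝ᵥ x := by simpa using dotProduct_star_self_nonneg x
  simp only [star_trivial, sub_mulVec, smul_mulVec, one_mulVec, vecMulVec_mulVec, dotProduct_sub,
    dotProduct_smul, smul_eq_mul, op_smul_eq_mul, dotProduct_comm x v]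
  nlinarith

theorem posSemidef_sum_smul_vecMulVec_self {p : ι → κ → ℝ} (hp : ∀ i j, 0 ≤ p i j)
    (v : ι → κ → n → ℝ) : (∑ i, ∑ j, p i j • vecMulVec (v i j) (v i j)).PosSemidef :=
  posSemidef_sum _ fun i _ => posSemidef_sum _ fun j _ =>
    (posSemidef_vecMulVec_self (v i j)).smul (hp i j)

theorem posSemidef_smul_one_sub_sum_smul_vecMulVec_self [DecidableEq n] {p : ι → κ → ℝ}
    (hp : ∀ i j, 0 ≤ p i j) (hp₁ : ∑ i, ∑ j, p i j = 1) {v : ι → κ → n → ℝ} {C : ℝ}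
    (hv : ∀ i j, v i j ⬝ᵥ v i j ≤ C) :
    (C • 1 - ∑ i, ∑ j, p i j • vecMulVec (v i j) (v i j)).PosSemidef := by
  have hmix : C • 1 - ∑ i, ∑ j, p i j • vecMulVec (v i j) (v i j) =
      ∑ i, ∑ j, p i j • (C • 1 - vecMulVec (v i j) (v i j)) := by
    simp only [smul_sub, sum_sub_distrib, ← sum_smul, hp₁, one_smul]
  rw [hmix]
  exact posSemidef_sum _ fun i _ => posSemidef_sum _ fun j _ =>
    (posSemidef_smul_one_sub_vecMulVec_self (hv i j)).smul (hp i j)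

end OuterProducts

section TransportPlans

variable {ι κ : Type*} [Fintype ι] [Fintype κ]

def transportPlans (r : ι → ℝ) (c : κ → ℝ) : Set (Matrix ι κ ℝ) :=
  {p | (∀ i j, 0 ≤ p i j) ∧ (∀ i, ∑ j, p i j = r i) ∧ (∀ j, ∑ i, p i j = c j)}

theorem vecMulVec_mem_transportPlans {r : ι → ℝ} {c : κ → ℝ} (hr : ∀ i, 0 ≤ r i)
    (hrs : ∑ i, r i = 1) (hc : ∀ j, 0 ≤ c j) (hcs : ∑ j, c j = 1) :
    vecMulVec r c ∈ transportPlans r c := by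
  refine ⟨fun i j => mul_nonneg (hr i) (hc j), fun i => ?_, fun j => ?_⟩
  · simp only [vecMulVec_apply, ← mul_sum, hcs, mul_one]
  · simp only [vecMulVec_apply, ← sum_mul, hrs, one_mul]

theorem sum_sum_eq_one_of_mem_transportPlans {r : ι → ℝ} {c : κ → ℝ} (hrs : ∑ i, r i = 1)
    {p : Matrix ι κ ℝ} (hp : p ∈ transportPlans r c) : ∑ i, ∑ j, p i j = 1 := by
  simp only [hp.2.1, hrs]

end TransportPlans

/-- `f(U) = min_{p ∈ Π(μ,ν)} Trace(Uᵀ V_p U)` is `2‖C‖_∞`-weakly concave, i.e.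
`U ↦ f(U) - ‖C‖_∞‖U‖_F²` is concave on ℝ^{d×k}. -/
theorem f_weakly_concave {n d k : ℕ}
    (x y : Fin n → Fin d → ℝ) (r c : Fin n → ℝ)
    (hr : ∀ i, 0 ≤ r i) (hrs : ∑ i, r i = 1)
    (hc : ∀ j, 0 ≤ c j) (hcs : ∑ j, c j = 1)
    (Plans : Set (Matrix (Fin n) (Fin n) ℝ))
    (hPlans : Plans = {p | (∀ i j, 0 ≤ p i j) ∧ (∀ i, ∑ j, p i j = r i) ∧
      (∀ j, ∑ i, p i j = c j)})
    (Cinf : ℝ) (hC : Cinf = ⨆ i, ⨆ j, ∑ l, (x i l - y j l) ^ 2)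
    (f : Matrix (Fin d) (Fin k) ℝ → ℝ)
    (hf : ∀ U, f U = sInf ((fun p : Matrix (Fin n) (Fin n) ℝ =>
      Matrix.trace (Uᵀ * (∑ i, ∑ j, p i j • Matrix.vecMulVec (x i - y j) (x i - y j)) * U))
      '' Plans)) :
    ConcaveOn ℝ Set.univ (fun U : Matrix (Fin d) (Fin k) ℝ =>
      f U - Cinf * ∑ a, ∑ b, (U a b) ^ 2) := by
  change Plans = transportPlans r c at hPlans
  subst hPlans
  set V : Matrix (Fin n) (Fin n) ℝ → Matrix (Fin d) (Fin d) ℝ :=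
    fun p => ∑ i, ∑ j, p i j • vecMulVec (x i - y j) (x i - y j)
  have hCinf : ∀ i j, (x i - y j) ⬝ᵥ (x i - y j) ≤ Cinf := fun i j => by
    simpa only [hC, dotProduct, Pi.sub_apply, ← sq] using
      le_ciSup_of_le (Finite.bddAbove_range _) i
        (le_ciSup (f := fun j => ∑ l, (x i l - y j l) ^ 2) (Finite.bddAbove_range _) j)
  have hne : (transportPlans r c).Nonempty := ⟨_, vecMulVec_mem_transportPlans hr hrs hc hcs⟩
  have hglb : ∀ U : Matrix (Fin d) (Fin k) ℝ,
      IsGLB ((fun p => trace (Uᵀ * V p * U)) '' transportPlans r c) (f U) := fun U =>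
    hf U ▸ isGLB_csInf (hne.image _) ⟨0, by
      rintro _ ⟨p, hp, rfl⟩
      exact trace_transpose_mul_mul_nonneg (posSemidef_sum_smul_vecMulVec_self hp.1 _) U⟩
  refine concaveOn_of_isGLB (S := transportPlans r c)
    (F := fun p U => -trace (Uᵀ * (Cinf • 1 - V p) * U)) convex_univ
    (fun p hp => (convexOn_trace_transpose_mul_mul <|
      posSemidef_smul_one_sub_sum_smul_vecMulVec_self hp.1
        (sum_sum_eq_one_of_mem_transportPlans hrs hp) hCinf).neg) fun U _ => ?_
  convert (OrderIso.addRight (-(Cinf * ∑ a, ∑ b, U a b ^ 2))).isGLB_image'.2 (hglb U) using 1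
  · rw [Set.image_image]
    refine Set.image_congr fun p _ => ?_
    simp only [trace_transpose_mul_smul_one_sub_mul, OrderIso.addRight_apply]
    ring
  · simp only [sub_eq_add_neg, OrderIso.addRight_apply]
end

section
/- Let f_η(U) = min_{π ∈ Π(μ,ν)} { Trace(Uᵀ V_π U) - ηH(π) } where the minimizer π*(U) satisfies ‖π*(U₁) - π*(U₂)‖₁ ≤ (2‖C‖_∞/η)‖U₁ - U₂‖_F for U₁, U₂ ∈ St(d,k). Then for all U₁, U₂ ∈ St(d,k), |f_η(U₁) - f_η(U₂) - ⟨∇f_η(U₂), U₁ - U₂⟩| ≤ (‖C‖_∞ + 2‖C‖_∞²/η) ‖U₁ - U₂‖_F², where ∇f_η(U) = 2 V_{π*(U)} U. -/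
open Finset Matrix

lemma log_lb {r : ℝ} (hr : 0 < r) :
    (5*r^2 - 4*r - 1) / (2*r^2 + 4*r) ≤ Real.log r := by
  set f : ℝ → ℝ := fun s => Real.log s - (5*s^2 - 4*s - 1)/(2*s^2 + 4*s) with hf
  have hder : ∀ s : ℝ, 0 < s → HasDerivAt f ((s-1)^3/(s^2*(s+2)^2)) s := by
    intro s hs
    have hd1 : HasDerivAt Real.log s⁻¹ s := Real.hasDerivAt_log hs.ne'
    have hden : (2*s^2 + 4*s) ≠ 0 := by nlinarith
    have hd2 : HasDerivAt (fun u : ℝ => (5*u^2 - 4*u - 1)/(2*u^2 + 4*u))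
        (((10*s - 4)*(2*s^2+4*s) - (5*s^2-4*s-1)*(4*s+4))/(2*s^2+4*s)^2) s := by
      have hN : HasDerivAt (fun u : ℝ => 5*u^2 - 4*u - 1) (10*s - 4) s := by
        have := ((hasDerivAt_pow 2 s).const_mul (5:ℝ)).sub ((hasDerivAt_id s).const_mul (4:ℝ))
        have h2 := this.sub_const 1
        exact h2.congr_deriv (by ring)
      have hD : HasDerivAt (fun u : ℝ => 2*u^2 + 4*u) (4*s + 4) s := by
        have := ((hasDerivAt_pow 2 s).const_mul (2:ℝ)).add ((hasDerivAt_id s).const_mul (4:ℝ))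
        exact this.congr_deriv (by ring)
      exact hN.div hD hden
    have h := hd1.sub hd2
    refine h.congr_deriv ?_
    field_simp
    ring
  have key : ∀ s : ℝ, 0 < s → 0 ≤ f s := by
    intro s hs
    rcases le_or_gt 1 s with h1 | h1
    · have hmono : MonotoneOn f (Set.Ici (1:ℝ)) := by
        apply monotoneOn_of_deriv_nonneg (convex_Ici 1)
        · apply ContinuousOn.sub
          · exact fun u hu => (Real.continuousAt_log (by simp at hu; linarith)).continuousWithinAt
          · apply ContinuousOn.div (by fun_prop) (by fun_prop)
            intro u hu; simp at hu; nlinarith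
        · intro u hu
          simp only [interior_Ici, Set.mem_Ioi] at hu
          exact ((hder u (by linarith)).differentiableAt).differentiableWithinAt
        · intro u hu
          simp only [interior_Ici, Set.mem_Ioi] at hu
          rw [(hder u (by linarith)).deriv]
          apply div_nonneg (pow_nonneg (by linarith) 3) (by positivity)
      have h0 : f 1 = 0 := by simp [hf]; norm_num
      have := hmono (Set.mem_Ici.2 le_rfl) (Set.mem_Ici.2 h1) h1
      linarith [this]
    · have hanti : AntitoneOn f (Set.Ioc (0:ℝ) 1) := by
        apply antitoneOn_of_deriv_nonpos (convex_Ioc 0 1)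
        · apply ContinuousOn.sub
          · exact fun u hu => (Real.continuousAt_log (by simp at hu; linarith [hu.1])).continuousWithinAt
          · apply ContinuousOn.div (by fun_prop) (by fun_prop)
            intro u hu; simp at hu; nlinarith [hu.1]
        · intro u hu
          rw [interior_Ioc] at hu
          exact ((hder u hu.1).differentiableAt).differentiableWithinAt
        · intro u hu
          rw [interior_Ioc] at hu
          rw [(hder u hu.1).deriv]
          have h3 : (u-1)^3 ≤ 0 := by nlinarith [hu.1, hu.2, sq_nonneg (u-1)]
          have h4 : (0:ℝ) < u^2*(u+2)^2 := by nlinarith [hu.1]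
          exact div_nonpos_of_nonpos_of_nonneg h3 h4.le
      have h0 : f 1 = 0 := by simp [hf]; norm_num
      have := hanti (Set.mem_Ioc.2 ⟨hs, h1.le⟩) (Set.mem_Ioc.2 ⟨one_pos, le_rfl⟩) h1.le
      linarith [this]
  have := key r hr
  simp only [hf] at this
  linarith

lemma klpt {u m : ℝ} (hu : 0 ≤ u) (hm : 0 < m) :
    u - m + 3*(u-m)^2/(2*u+4*m) ≤ u * (Real.log u - Real.log m) := by
  rcases eq_or_lt_of_le hu with h0 | hu
  · rw [← h0]
    have : (0:ℝ) - m + 3*(0-m)^2/(2*0+4*m) = -m + 3*m/4 := by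
      field_simp; ring
    rw [this]; nlinarith
  · have hr := log_lb (r := u/m) (by positivity)
    rw [Real.log_div hu.ne' hm.ne'] at hr
    have hiden : (0:ℝ) < 2*(u/m)^2 + 4*(u/m) := by positivity
    have heq : (5*(u/m)^2 - 4*(u/m) - 1) / (2*(u/m)^2 + 4*(u/m))
        = (u - m + 3*(u-m)^2/(2*u+4*m)) / u := by
      rw [div_eq_div_iff hiden.ne' hu.ne']
      field_simp
      ring
    rw [heq] at hr
    calc u - m + 3*(u-m)^2/(2*u+4*m)
        = (u - m + 3*(u-m)^2/(2*u+4*m))/u * u := by field_simp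
      _ ≤ (Real.log u - Real.log m) * u := by
          apply mul_le_mul_of_nonneg_right hr hu.le
      _ = u * (Real.log u - Real.log m) := by ring

lemma harm {A B t : ℝ} (hA : 0 < A) (hB : 0 < B) (ht : 0 ≤ t) (ht1 : t ≤ 1) :
    1/((1-t)*A + t*B) ≤ (1-t)/A + t/B := by
  have hC : 0 < (1-t)*A + t*B := by
    rcases lt_or_eq_of_le ht1 with h|h
    · nlinarith [mul_pos (by linarith : (0:ℝ) < 1-t) hA, mul_nonneg ht hB.le]
    · subst h; simpa using hB
  rw [div_add_div _ _ hA.ne' hB.ne', div_le_div_iff₀ hC (by positivity)]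
  nlinarith [sq_nonneg (A - B), mul_nonneg (mul_nonneg ht (by linarith : (0:ℝ) ≤ 1 - t)) (sq_nonneg (A-B))]

lemma perterm {p q t : ℝ} (hp : 0 ≤ p) (hq : 0 ≤ q) (ht : 0 < t) (ht1 : t < 1) :
    3*t*(1-t)*(p-q)^2/(2*((1-t)*p+t*q)+4*(t*p+(1-t)*q)) ≤
      t*(p*(Real.log p - Real.log (t*p+(1-t)*q))) +
      (1-t)*(q*(Real.log q - Real.log (t*p+(1-t)*q))) := by
  set m := t*p+(1-t)*q with hm
  rcases eq_or_lt_of_le (by nlinarith : (0:ℝ) ≤ m) with h0 | hmpos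
  · have hp0 : p = 0 := by nlinarith
    have hq0 : q = 0 := by nlinarith
    simp [hp0, hq0, ← h0]
  · have h1 := klpt hp hmpos
    have h2 := klpt hq hmpos
    have hA : (0:ℝ) < 2*p + 4*m := by nlinarith
    have hB : (0:ℝ) < 2*q + 4*m := by nlinarith
    -- combination
    have hcomb : t*(p - m + 3*(p-m)^2/(2*p+4*m)) + (1-t)*(q - m + 3*(q-m)^2/(2*q+4*m)) ≤
        t*(p*(Real.log p - Real.log m)) + (1-t)*(q*(Real.log q - Real.log m)) := by
      have := mul_le_mul_of_nonneg_left h1 ht.le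
      have := mul_le_mul_of_nonneg_left h2 (by linarith : (0:ℝ) ≤ 1-t)
      nlinarith
    refine le_trans ?_ hcomb
    have hzero : t*(p - m) + (1-t)*(q - m) = 0 := by rw [hm]; ring
    have hpm : p - m = (1-t)*(p - q) := by rw [hm]; ring
    have hqm : q - m = -(t*(p - q)) := by rw [hm]; ring
    -- goal: 3t(1-t)d²/(2m'+4m) ≤ t*3(p-m)²/(2p+4m) + (1-t)*3(q-m)²/(2q+4m)
    have hh := harm hA hB ht.le ht1.le
    have hd2 : (0:ℝ) ≤ 3*t*(1-t)*(p-q)^2 := by nlinarith [sq_nonneg (p-q)]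
    have hmul := mul_le_mul_of_nonneg_left hh hd2
    have hCden : (1-t)*(2*p+4*m) + t*(2*q+4*m) = 2*((1-t)*p+t*q)+4*m := by ring
    rw [hCden] at hmul
    have expand : 3*t*(1-t)*(p-q)^2 * ((1-t)/(2*p+4*m) + t/(2*q+4*m)) =
        t*(3*(p-m)^2/(2*p+4*m)) + (1-t)*(3*(q-m)^2/(2*q+4*m)) := by
      rw [hpm, hqm]
      field_simp
    rw [expand] at hmul
    have : 3*t*(1-t)*(p-q)^2/(2*((1-t)*p+t*q)+4*m) =
        3*t*(1-t)*(p-q)^2 * (1/(2*((1-t)*p+t*q)+4*m)) := by ring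
    rw [this]
    calc 3*t*(1-t)*(p-q)^2 * (1/(2*((1-t)*p+t*q)+4*m))
        ≤ t*(3*(p-m)^2/(2*p+4*m)) + (1-t)*(3*(q-m)^2/(2*q+4*m)) := hmul
      _ = t*(p - m + 3*(p-m)^2/(2*p+4*m)) + (1-t)*(q - m + 3*(q-m)^2/(2*q+4*m))
            - (t*(p-m) + (1-t)*(q-m)) := by ring
      _ = t*(p - m + 3*(p-m)^2/(2*p+4*m)) + (1-t)*(q - m + 3*(q-m)^2/(2*q+4*m)) := by
            rw [hzero]; ring

lemma strong_conv {ι : Type*} [Fintype ι] (p q : ι → ℝ) (hp : ∀ i, 0 ≤ p i)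
    (hq : ∀ i, 0 ≤ q i) (hps : ∑ i, p i = 1) (hqs : ∑ i, q i = 1)
    {t : ℝ} (ht : 0 < t) (ht1 : t < 1) :
    ∑ i, (t*p i + (1-t)*q i) * Real.log (t*p i + (1-t)*q i)
      + t*(1-t)/2 * (∑ i, |p i - q i|)^2
    ≤ t * ∑ i, p i * Real.log (p i) + (1-t) * ∑ i, q i * Real.log (q i) := by
  classical
  set m : ι → ℝ := fun i => t*p i + (1-t)*q i with hm
  set w : ι → ℝ := fun i => 2*((1-t)*p i + t*q i) + 4*(t*p i + (1-t)*q i) with hw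
  have hwnn : ∀ i, 0 ≤ w i := by
    intro i
    have := hp i; have := hq i
    simp only [hw]
    nlinarith
  have hwzero : ∀ i, w i = 0 → p i - q i = 0 := by
    intro i h
    have := hp i; have := hq i
    simp only [hw] at h
    nlinarith
  -- gap identity and per-term bound
  have hgap : ∑ i, (3*t*(1-t)*(p i - q i)^2 / w i) ≤
      t * ∑ i, p i * Real.log (p i) + (1-t) * ∑ i, q i * Real.log (q i)
        - ∑ i, m i * Real.log (m i) := by
    rw [Finset.mul_sum, Finset.mul_sum, ← Finset.sum_add_distrib, ← Finset.sum_sub_distrib]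
    apply Finset.sum_le_sum
    intro i _
    have hpt := perterm (hp i) (hq i) ht ht1
    have hid : t*(p i * Real.log (p i)) + (1-t)*(q i * Real.log (q i))
        - m i * Real.log (m i)
        = t*(p i*(Real.log (p i) - Real.log (m i)))
          + (1-t)*(q i*(Real.log (q i) - Real.log (m i))) := by
      simp only [hm]; ring
    calc 3*t*(1-t)*(p i - q i)^2 / w i
        ≤ t*(p i*(Real.log (p i) - Real.log (t*p i+(1-t)*q i)))
          + (1-t)*(q i*(Real.log (q i) - Real.log (t*p i+(1-t)*q i))) := hpt
      _ = t*(p i * Real.log (p i)) + (1-t)*(q i * Real.log (q i))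
          - m i * Real.log (m i) := by rw [hid]
  -- Cauchy-Schwarz (Sedrakyan)
  have hCS : (∑ i, |p i - q i|)^2 ≤ 6 * ∑ i, (p i - q i)^2 / w i := by
    set s : Finset ι := Finset.univ.filter (fun i => 0 < w i) with hs
    have hoff : ∀ i ∈ Finset.univ, i ∉ s → |p i - q i| = 0 := by
      intro i _ hi
      simp only [hs, Finset.mem_filter, Finset.mem_univ, true_and, not_lt] at hi
      have : w i = 0 := le_antisymm hi (hwnn i)
      rw [hwzero i this]; simp
    have hsum1 : ∑ i, |p i - q i| = ∑ i ∈ s, |p i - q i| :=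
      (Finset.sum_subset (Finset.filter_subset _ _) (fun i hi h2 => hoff i hi h2)).symm
    have hsum2 : ∑ i ∈ s, (p i - q i)^2 / w i ≤ ∑ i, (p i - q i)^2 / w i := by
      apply Finset.sum_le_sum_of_subset_of_nonneg (Finset.filter_subset _ _)
      intro i _ _
      exact div_nonneg (sq_nonneg _) (hwnn i)
    have hwsum : ∑ i ∈ s, w i ≤ 6 := by
      have h1 : ∑ i ∈ s, w i ≤ ∑ i, w i :=
        Finset.sum_le_sum_of_subset_of_nonneg (Finset.filter_subset _ _)
          (fun i _ _ => hwnn i)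
      have h2 : ∑ i, w i = 6 := by
        have : ∀ i, w i = (2+2*t)*p i + (4-2*t)*q i := by
          intro i; simp only [hw]; ring
        rw [Finset.sum_congr rfl (fun i _ => this i), Finset.sum_add_distrib,
          ← Finset.mul_sum, ← Finset.mul_sum, hps, hqs]
        ring
      linarith
    have hsed := Finset.sq_sum_div_le_sum_sq_div s (fun i => |p i - q i|)
      (g := w) (fun i hi => (Finset.mem_filter.1 hi).2)
    simp only [sq_abs] at hsed
    have hwpos : 0 ≤ ∑ i ∈ s, w i :=
      Finset.sum_nonneg (fun i _ => hwnn i)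
    have hspos : 0 < ∑ i ∈ s, w i := by
      obtain ⟨i, hpi⟩ : ∃ i, 0 < p i := by
        by_contra h
        push_neg at h
        have : ∑ i, p i ≤ 0 := Finset.sum_nonpos (fun i _ => h i)
        linarith
      have hwi : 0 < w i := by
        have := hq i
        simp only [hw]
        nlinarith
      exact Finset.sum_pos' (fun j _ => hwnn j)
        ⟨i, Finset.mem_filter.2 ⟨Finset.mem_univ i, hwi⟩, hwi⟩
    have := (div_le_iff₀ hspos).1 hsed
    calc (∑ i, |p i - q i|)^2 = (∑ i ∈ s, |p i - q i|)^2 := by rw [hsum1]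
      _ ≤ (∑ i ∈ s, (p i - q i)^2 / w i) * (∑ i ∈ s, w i) := this
      _ ≤ (∑ i, (p i - q i)^2 / w i) * 6 := by
          apply mul_le_mul hsum2 hwsum hwpos
          exact Finset.sum_nonneg (fun i _ => div_nonneg (sq_nonneg _) (hwnn i))
      _ = 6 * ∑ i, (p i - q i)^2 / w i := by ring
  -- combine
  have hfac : ∑ i, (3*t*(1-t)*(p i - q i)^2 / w i)
      = 3*t*(1-t) * ∑ i, (p i - q i)^2 / w i := by
    rw [Finset.mul_sum]
    exact Finset.sum_congr rfl (fun i _ => by ring)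
  have h6 : t*(1-t)/2 * (∑ i, |p i - q i|)^2 ≤ 3*t*(1-t) * ∑ i, (p i - q i)^2 / w i := by
    have h1 : t*(1-t)/2 * (∑ i, |p i - q i|)^2 ≤ t*(1-t)/2 * (6 * ∑ i, (p i - q i)^2 / w i) := by
      apply mul_le_mul_of_nonneg_left hCS
      nlinarith
    linarith [h1]
  rw [hfac] at hgap
  linarith

lemma bessel {d k : ℕ} (U : Matrix (Fin d) (Fin k) ℝ) (hU : Uᵀ * U = 1) (z : Fin d → ℝ) :
    ∑ b, (∑ a, z a * U a b)^2 ≤ ∑ a, (z a)^2 := by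
  classical
  set c : Fin k → ℝ := fun b => ∑ a, z a * U a b with hcdef
  have horth : ∀ b b', ∑ a, U a b * U a b' = if b = b' then (1:ℝ) else 0 := by
    intro b b'
    have := congrFun (congrFun hU b) b'
    simpa [Matrix.mul_apply, Matrix.transpose_apply, Matrix.one_apply] using this
  have e1 : ∑ a, z a * (∑ b, c b * U a b) = ∑ b, (c b)^2 := by
    calc ∑ a, z a * (∑ b, c b * U a b)
        = ∑ a, ∑ b, c b * (z a * U a b) := by
          refine Finset.sum_congr rfl fun a _ => ?_
          rw [Finset.mul_sum]
          exact Finset.sum_congr rfl fun b _ => by ring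
      _ = ∑ b, ∑ a, c b * (z a * U a b) := Finset.sum_comm
      _ = ∑ b, c b * ∑ a, z a * U a b := by
          refine Finset.sum_congr rfl fun b _ => ?_
          rw [← Finset.mul_sum]
      _ = ∑ b, (c b)^2 := by
          refine Finset.sum_congr rfl fun b _ => ?_
          have : ∑ a, z a * U a b = c b := rfl
          rw [this]; ring
  have e2 : ∑ a, (∑ b, c b * U a b)^2 = ∑ b, (c b)^2 := by
    calc ∑ a, (∑ b, c b * U a b)^2
        = ∑ a, ∑ b, ∑ b', (c b * c b') * (U a b * U a b') := by
          refine Finset.sum_congr rfl fun a _ => ?_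
          rw [sq, Finset.sum_mul_sum]
          exact Finset.sum_congr rfl fun b _ =>
            Finset.sum_congr rfl fun b' _ => by ring
      _ = ∑ b, ∑ b', (c b * c b') * ∑ a, (U a b * U a b') := by
          rw [Finset.sum_comm]
          refine Finset.sum_congr rfl fun b _ => ?_
          rw [Finset.sum_comm]
          refine Finset.sum_congr rfl fun b' _ => ?_
          rw [← Finset.mul_sum]
      _ = ∑ b, (c b)^2 := by
          refine Finset.sum_congr rfl fun b _ => ?_
          rw [Finset.sum_congr rfl fun b' (_ : b' ∈ Finset.univ) => by rw [horth b b']]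
          simp [sq]
  have key : 0 ≤ ∑ a, (z a - ∑ b, c b * U a b)^2 :=
    Finset.sum_nonneg fun a _ => sq_nonneg _
  have expand : ∑ a, (z a - ∑ b, c b * U a b)^2
      = ∑ a, (z a)^2 - ∑ b, (c b)^2 := by
    have h1 : ∀ a, (z a - ∑ b, c b * U a b)^2
        = (z a)^2 - 2*(z a * (∑ b, c b * U a b)) + (∑ b, c b * U a b)^2 := by
      intro a; ring
    rw [Finset.sum_congr rfl fun a _ => h1 a]
    rw [Finset.sum_add_distrib, Finset.sum_sub_distrib, e2]
    have h2 : ∑ a, 2*(z a * (∑ b, c b * U a b)) = 2 * ∑ a, z a * (∑ b, c b * U a b) := by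
      rw [Finset.mul_sum]
    rw [h2, e1]
    ring
  rw [expand] at key
  have : ∑ b, (c b)^2 ≤ ∑ a, (z a)^2 := by linarith
  simpa [hcdef] using this

lemma trace_eq {d k : ℕ} (M : Matrix (Fin d) (Fin d) ℝ) (U : Matrix (Fin d) (Fin k) ℝ) :
    Matrix.trace (Uᵀ * M * U) = ∑ a, ∑ b, (M * U) a b * U a b := by
  rw [Matrix.mul_assoc, Matrix.trace_mul_comm]
  simp only [Matrix.trace, Matrix.diag, Matrix.mul_apply, Matrix.transpose_apply]

lemma sum_swap4 {α β γ δ : Type*} [Fintype α] [Fintype β] [Fintype γ] [Fintype δ]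
    (f : α → β → γ → δ → ℝ) :
    ∑ a, ∑ b, ∑ i, ∑ j, f a b i j = ∑ i, ∑ j, ∑ a, ∑ b, f a b i j := by
  calc ∑ a, ∑ b, ∑ i, ∑ j, f a b i j
      = ∑ a, ∑ i, ∑ b, ∑ j, f a b i j :=
        Finset.sum_congr rfl fun a _ => Finset.sum_comm
    _ = ∑ a, ∑ i, ∑ j, ∑ b, f a b i j :=
        Finset.sum_congr rfl fun a _ => Finset.sum_congr rfl fun i _ => Finset.sum_comm
    _ = ∑ i, ∑ a, ∑ j, ∑ b, f a b i j := Finset.sum_comm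
    _ = ∑ i, ∑ j, ∑ a, ∑ b, f a b i j :=
        Finset.sum_congr rfl fun i _ => Finset.sum_comm

lemma pair_sum {n d k : ℕ} (x y : Fin n → Fin d → ℝ) (p : Matrix (Fin n) (Fin n) ℝ)
    (A B : Matrix (Fin d) (Fin k) ℝ) :
    ∑ a, ∑ b, (((∑ i, ∑ j, p i j • Matrix.vecMulVec (x i - y j) (x i - y j)) * A) a b) * B a b
      = ∑ i, ∑ j, p i j *
          ∑ b, ((∑ a, (x i a - y j a) * A a b) * (∑ a, (x i a - y j a) * B a b)) := by
  have hVA : ∀ a b,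
      ((∑ i, ∑ j, p i j • Matrix.vecMulVec (x i - y j) (x i - y j)) * A) a b
      = ∑ i, ∑ j, p i j * ((x i a - y j a) * (∑ a', (x i a' - y j a') * A a' b)) := by
    intro a b
    rw [Matrix.mul_apply]
    simp only [Matrix.sum_apply, Matrix.smul_apply, Matrix.vecMulVec_apply, smul_eq_mul,
      Pi.sub_apply]
    calc ∑ a', (∑ i, ∑ j, p i j * ((x i a - y j a) * (x i a' - y j a'))) * A a' b
        = ∑ a', ∑ i, ∑ j, p i j * ((x i a - y j a) * (x i a' - y j a')) * A a' b := by
          refine Finset.sum_congr rfl fun a' _ => ?_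
          rw [Finset.sum_mul]
          exact Finset.sum_congr rfl fun i _ => by rw [Finset.sum_mul]
      _ = ∑ i, ∑ j, ∑ a', p i j * ((x i a - y j a) * (x i a' - y j a')) * A a' b := by
          rw [Finset.sum_comm]
          exact Finset.sum_congr rfl fun i _ => Finset.sum_comm
      _ = ∑ i, ∑ j, p i j * ((x i a - y j a) * (∑ a', (x i a' - y j a') * A a' b)) := by
          refine Finset.sum_congr rfl fun i _ => Finset.sum_congr rfl fun j _ => ?_
          rw [Finset.mul_sum, Finset.mul_sum]
          exact Finset.sum_congr rfl fun a' _ => by ring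
  calc ∑ a, ∑ b, (((∑ i, ∑ j, p i j • Matrix.vecMulVec (x i - y j) (x i - y j)) * A) a b) * B a b
      = ∑ a, ∑ b, ∑ i, ∑ j,
          p i j * ((x i a - y j a) * (∑ a', (x i a' - y j a') * A a' b)) * B a b := by
        refine Finset.sum_congr rfl fun a _ => Finset.sum_congr rfl fun b _ => ?_
        rw [hVA a b, Finset.sum_mul]
        exact Finset.sum_congr rfl fun i _ => by rw [Finset.sum_mul]
    _ = ∑ i, ∑ j, ∑ a, ∑ b,
          p i j * ((x i a - y j a) * (∑ a', (x i a' - y j a') * A a' b)) * B a b :=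
        sum_swap4 _
    _ = ∑ i, ∑ j, p i j *
          ∑ b, ((∑ a, (x i a - y j a) * A a b) * (∑ a, (x i a - y j a) * B a b)) := by
        refine Finset.sum_congr rfl fun i _ => Finset.sum_congr rfl fun j _ => ?_
        rw [Finset.sum_comm, Finset.mul_sum]
        refine Finset.sum_congr rfl fun b _ => ?_
        rw [Finset.mul_sum, Finset.mul_sum]
        refine Finset.sum_congr rfl fun a _ => ?_
        ring

set_option maxHeartbeats 2000000 in
/-- Gradient inequality for the entropic regularized function
`f_η(U) = min_{p ∈ Π(μ,ν)} {Trace(Uᵀ V_p U) - ηH(p)}` over the Stiefel manifold, where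
`∇f_η(U) = 2 V_{p*(U)} U` and the minimizers satisfy an ℓ₁-Lipschitz bound. -/
theorem entropic_gradient_inequality {n d k : ℕ}
    (x y : Fin n → Fin d → ℝ) (r c : Fin n → ℝ)
    (hr : ∀ i, 0 ≤ r i) (hrs : ∑ i, r i = 1)
    (hc : ∀ j, 0 ≤ c j) (hcs : ∑ j, c j = 1)
    (Plans : Set (Matrix (Fin n) (Fin n) ℝ))
    (hPlans : Plans = {p | (∀ i j, 0 ≤ p i j) ∧ (∀ i, ∑ j, p i j = r i) ∧
      (∀ j, ∑ i, p i j = c j)})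
    (η : ℝ) (hη : 0 < η)
    (Cinf : ℝ) (hC : Cinf = ⨆ i, ⨆ j, ∑ l, (x i l - y j l) ^ 2)
    (V : Matrix (Fin n) (Fin n) ℝ → Matrix (Fin d) (Fin d) ℝ)
    (hVdef : ∀ p, V p = ∑ i, ∑ j, p i j • Matrix.vecMulVec (x i - y j) (x i - y j))
    (pstar : Matrix (Fin d) (Fin k) ℝ → Matrix (Fin n) (Fin n) ℝ)
    (hmem : ∀ U, pstar U ∈ Plans)
    (hmin : ∀ U, ∀ p ∈ Plans,
      Matrix.trace (Uᵀ * V (pstar U) * U) - η * (-(∑ i, ∑ j, pstar U i j *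
          (Real.log (pstar U i j) - 1))) ≤
        Matrix.trace (Uᵀ * V p * U) - η * (-(∑ i, ∑ j, p i j * (Real.log (p i j) - 1))))
    (hlip : ∀ U₁ U₂ : Matrix (Fin d) (Fin k) ℝ, U₁ᵀ * U₁ = 1 → U₂ᵀ * U₂ = 1 →
      (∑ i, ∑ j, |pstar U₁ i j - pstar U₂ i j|) ≤
        (2 * Cinf / η) * Real.sqrt (∑ a, ∑ b, ((U₁ - U₂) a b) ^ 2))
    (fη : Matrix (Fin d) (Fin k) ℝ → ℝ)
    (hf : ∀ U, fη U = Matrix.trace (Uᵀ * V (pstar U) * U) -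
      η * (-(∑ i, ∑ j, pstar U i j * (Real.log (pstar U i j) - 1)))) :
    ∀ U₁ U₂ : Matrix (Fin d) (Fin k) ℝ, U₁ᵀ * U₁ = 1 → U₂ᵀ * U₂ = 1 →
      |fη U₁ - fη U₂ - ∑ a, ∑ b, (((2:ℝ) • (V (pstar U₂) * U₂) : Matrix (Fin d) (Fin k) ℝ) a b) * (U₁ - U₂) a b| ≤
        (Cinf + 2 * Cinf ^ 2 / η) * (∑ a, ∑ b, ((U₁ - U₂) a b) ^ 2) := by
  intro U₁ U₂ hU₁ hU₂
  classical
  -- degenerate n = 0 impossible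
  have hn : 0 < n := by
    rcases Nat.eq_zero_or_pos n with h | h
    · subst h
      simp at hrs
    · exact h
  -- basic facts about Cinf
  have hCz : ∀ i j, (∑ l, (x i l - y j l)^2) ≤ Cinf := by
    intro i j
    rw [hC]
    have h1 : (∑ l, (x i l - y j l)^2) ≤ ⨆ j', ∑ l, (x i l - y j' l)^2 :=
      le_ciSup (f := fun j' => ∑ l, (x i l - y j' l)^2)
        (Set.Finite.bddAbove (Set.finite_range _)) j
    exact h1.trans (le_ciSup (f := fun i' => ⨆ j', ∑ l, (x i' l - y j' l)^2)
      (Set.Finite.bddAbove (Set.finite_range _)) i)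
  have hC0 : 0 ≤ Cinf := le_trans (Finset.sum_nonneg fun l _ => sq_nonneg _)
      (hCz ⟨0, hn⟩ ⟨0, hn⟩)
  -- plan facts
  have hPfacts : ∀ p ∈ Plans, (∀ i j, 0 ≤ p i j) ∧ (∀ i, ∑ j, p i j = r i) ∧
      (∀ j, ∑ i, p i j = c j) := by
    intro p hp
    rwa [hPlans] at hp
  have htot : ∀ p ∈ Plans, ∑ i, ∑ j, p i j = 1 := by
    intro p hp
    obtain ⟨-, hrow, -⟩ := hPfacts p hp
    rw [Finset.sum_congr rfl fun i _ => hrow i, hrs]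
  set p₁ := pstar U₁ with hp₁def
  set p₂ := pstar U₂ with hp₂def
  obtain ⟨hp₁nn, hp₁row, hp₁col⟩ := hPfacts p₁ (hmem U₁)
  obtain ⟨hp₂nn, hp₂row, hp₂col⟩ := hPfacts p₂ (hmem U₂)
  have hp₁tot := htot p₁ (hmem U₁)
  have hp₂tot := htot p₂ (hmem U₂)
  set Δ := U₁ - U₂ with hΔdef
  set S := ∑ a, ∑ b, (Δ a b)^2 with hSdef
  have hS0 : 0 ≤ S := Finset.sum_nonneg fun a _ =>
    Finset.sum_nonneg fun b _ => sq_nonneg _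
  set q := Real.sqrt S with hqdef
  have hq0 : 0 ≤ q := Real.sqrt_nonneg S
  have hq2 : q^2 = S := Real.sq_sqrt hS0
  -- dot products
  set dz : Matrix (Fin d) (Fin k) ℝ → Fin n → Fin n → Fin k → ℝ :=
    fun M i j b => ∑ a, (x i a - y j a) * M a b with hdzdef
  set W : Matrix (Fin d) (Fin k) ℝ → Fin n → Fin n → ℝ :=
    fun M i j => ∑ b, (dz M i j b)^2 with hWdef
  set sd : Fin n → Fin n → ℝ := fun i j => ∑ b, dz U₂ i j b * dz Δ i j b with hsddef
  -- trace identity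
  have htr : ∀ (p : Matrix (Fin n) (Fin n) ℝ) (U : Matrix (Fin d) (Fin k) ℝ),
      Matrix.trace (Uᵀ * V p * U) = ∑ i, ∑ j, p i j * W U i j := by
    intro p U
    rw [hVdef p, trace_eq, pair_sum]
    refine Finset.sum_congr rfl fun i _ => Finset.sum_congr rfl fun j _ => ?_
    congr 1
    exact Finset.sum_congr rfl fun b _ => (sq (dz U i j b)) ▸ (by rw [sq])
  -- gradient identity
  have hgrad : (∑ a, ∑ b, (((2:ℝ) • (V p₂ * U₂) : Matrix (Fin d) (Fin k) ℝ) a b) * Δ a b)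
      = 2 * ∑ i, ∑ j, p₂ i j * sd i j := by
    have h1 : ∀ a b, (((2:ℝ) • (V p₂ * U₂) : Matrix (Fin d) (Fin k) ℝ) a b) * Δ a b
        = 2 * ((V p₂ * U₂) a b * Δ a b) := by
      intro a b
      simp only [Matrix.smul_apply, smul_eq_mul]
      ring
    calc (∑ a, ∑ b, (((2:ℝ) • (V p₂ * U₂) : Matrix (Fin d) (Fin k) ℝ) a b) * Δ a b)
        = ∑ a, ∑ b, 2 * ((V p₂ * U₂) a b * Δ a b) :=
          Finset.sum_congr rfl fun a _ => Finset.sum_congr rfl fun b _ => h1 a b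
      _ = 2 * ∑ a, ∑ b, (V p₂ * U₂) a b * Δ a b := by
          rw [Finset.mul_sum]
          exact Finset.sum_congr rfl fun a _ => (Finset.mul_sum _ _ _).symm
      _ = 2 * ∑ i, ∑ j, p₂ i j * sd i j := by
          rw [hVdef p₂, pair_sum]
  -- split identity
  have hsplit : ∀ i j, W U₁ i j = W U₂ i j + 2 * sd i j + W Δ i j := by
    intro i j
    have hlin : ∀ b, dz U₁ i j b = dz U₂ i j b + dz Δ i j b := by
      intro b
      simp only [hdzdef]
      rw [← Finset.sum_add_distrib]
      refine Finset.sum_congr rfl fun a _ => ?_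
      simp only [hΔdef, Matrix.sub_apply]
      ring
    have e1 : W U₁ i j = ∑ b, (dz U₂ i j b + dz Δ i j b)^2 := by
      simp only [hWdef]
      exact Finset.sum_congr rfl fun b _ => by rw [hlin b]
    have e2 : ∀ b, (dz U₂ i j b + dz Δ i j b)^2
        = (dz U₂ i j b)^2 + 2*(dz U₂ i j b * dz Δ i j b) + (dz Δ i j b)^2 :=
      fun b => by ring
    rw [e1, Finset.sum_congr rfl fun b _ => e2 b, Finset.sum_add_distrib,
      Finset.sum_add_distrib, ← Finset.mul_sum]
  -- bounds
  have hWle : ∀ (U : Matrix (Fin d) (Fin k) ℝ), Uᵀ * U = 1 → ∀ i j, W U i j ≤ Cinf := by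
    intro U hU i j
    exact (bessel U hU (fun a => x i a - y j a)).trans (hCz i j)
  have hWnn : ∀ (M : Matrix (Fin d) (Fin k) ℝ) (i j : Fin n), 0 ≤ W M i j :=
    fun M i j => Finset.sum_nonneg fun b _ => sq_nonneg _
  have hWD : ∀ i j, W Δ i j ≤ Cinf * S := by
    intro i j
    have hb : ∀ b, (dz Δ i j b)^2 ≤ (∑ a, (x i a - y j a)^2) * (∑ a, (Δ a b)^2) := by
      intro b
      simp only [hdzdef]
      exact Finset.sum_mul_sq_le_sq_mul_sq Finset.univ _ _
    calc W Δ i j ≤ ∑ b, (∑ a, (x i a - y j a)^2) * (∑ a, (Δ a b)^2) :=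
          Finset.sum_le_sum fun b _ => hb b
      _ = (∑ a, (x i a - y j a)^2) * (∑ b, ∑ a, (Δ a b)^2) := by rw [Finset.mul_sum]
      _ = (∑ a, (x i a - y j a)^2) * S := by rw [hSdef, Finset.sum_comm]
      _ ≤ Cinf * S := mul_le_mul_of_nonneg_right (hCz i j) hS0
  have hsd : ∀ i j, |sd i j| ≤ Cinf * q := by
    intro i j
    have hCS : (sd i j)^2 ≤ W U₂ i j * W Δ i j := by
      simp only [hsddef, hWdef]
      exact Finset.sum_mul_sq_le_sq_mul_sq Finset.univ _ _
    have h1 : W U₂ i j * W Δ i j ≤ Cinf * (Cinf * S) :=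
      mul_le_mul (hWle U₂ hU₂ i j) (hWD i j) (hWnn Δ i j) hC0
    have h2 : (sd i j)^2 ≤ (Cinf * q)^2 := by
      have he : (Cinf*q)^2 = Cinf * (Cinf * S) := by rw [mul_pow, hq2]; ring
      linarith [hCS, h1]
    calc |sd i j| = Real.sqrt ((sd i j)^2) := (Real.sqrt_sq_eq_abs _).symm
      _ ≤ Real.sqrt ((Cinf*q)^2) := Real.sqrt_le_sqrt h2
      _ = |Cinf * q| := Real.sqrt_sq_eq_abs _
      _ = Cinf * q := abs_of_nonneg (mul_nonneg hC0 hq0)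
  -- entropy and F
  set L : Matrix (Fin n) (Fin n) ℝ → ℝ :=
    fun p => ∑ i, ∑ j, p i j * Real.log (p i j) with hLdef
  have hEnt : ∀ p ∈ Plans, (∑ i, ∑ j, p i j * (Real.log (p i j) - 1)) = L p - 1 := by
    intro p hp
    rw [hLdef]
    have : ∀ i j, p i j * (Real.log (p i j) - 1) = p i j * Real.log (p i j) - p i j :=
      fun i j => by ring
    rw [Finset.sum_congr rfl fun i _ => Finset.sum_congr rfl fun j _ => this i j]
    rw [Finset.sum_congr rfl fun i (_ : i ∈ Finset.univ) => Finset.sum_sub_distrib (fun j => p i j * Real.log (p i j)) (fun j => p i j),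
      Finset.sum_sub_distrib, htot p hp]
  set F : Matrix (Fin n) (Fin n) ℝ → ℝ :=
    fun p => (∑ i, ∑ j, p i j * W U₂ i j) + η * L p with hFdef
  have hminF : ∀ p ∈ Plans, F p₂ ≤ F p := by
    intro p hp
    have h := hmin U₂ p hp
    rw [htr p₂ U₂, htr p U₂, hEnt p₂ (hmem U₂), hEnt p hp] at h
    simp only [hFdef]
    nlinarith [h]
  set aℓ := ∑ i, ∑ j, |p₁ i j - p₂ i j| with haℓdef
  have haℓ0 : 0 ≤ aℓ := Finset.sum_nonneg fun i _ =>
    Finset.sum_nonneg fun j _ => abs_nonneg _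
  have hFp1 : F p₁ = (∑ i, ∑ j, p₁ i j * W U₂ i j) + η * L p₁ := rfl
  have hFp2 : F p₂ = (∑ i, ∑ j, p₂ i j * W U₂ i j) + η * L p₂ := rfl
  have hLp1 : L p₁ = ∑ i, ∑ j, p₁ i j * Real.log (p₁ i j) := rfl
  have hLp2 : L p₂ = ∑ i, ∑ j, p₂ i j * Real.log (p₂ i j) := rfl
  have hstrong : F p₂ + η/2 * aℓ^2 ≤ F p₁ := by
    have hkey : ∀ t : ℝ, 0 < t → t < 1 → η*(1-t)/2 * aℓ^2 ≤ F p₁ - F p₂ := by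
      intro t ht ht1
      set pt : Matrix (Fin n) (Fin n) ℝ := fun i j => t * p₁ i j + (1-t) * p₂ i j with hptdef
      have hptP : pt ∈ Plans := by
        rw [hPlans]
        refine ⟨fun i j => ?_, fun i => ?_, fun j => ?_⟩
        · have h1 := hp₁nn i j; have h2 := hp₂nn i j
          simp only [hptdef]
          nlinarith
        · simp only [hptdef]
          rw [Finset.sum_add_distrib, ← Finset.mul_sum, ← Finset.mul_sum, hp₁row i, hp₂row i]
          ring
        · simp only [hptdef]
          rw [Finset.sum_add_distrib, ← Finset.mul_sum, ← Finset.mul_sum, hp₁col j, hp₂col j]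
          ring
      have h1 := hminF pt hptP
      have hlin : (∑ i, ∑ j, pt i j * W U₂ i j)
          = t * (∑ i, ∑ j, p₁ i j * W U₂ i j) + (1-t) * (∑ i, ∑ j, p₂ i j * W U₂ i j) := by
        rw [Finset.mul_sum, Finset.mul_sum, ← Finset.sum_add_distrib]
        refine Finset.sum_congr rfl fun i _ => ?_
        rw [Finset.mul_sum, Finset.mul_sum, ← Finset.sum_add_distrib]
        refine Finset.sum_congr rfl fun j _ => ?_
        simp only [hptdef]
        ring
      have hsc0 := strong_conv (ι := Fin n × Fin n)
        (fun z => p₁ z.1 z.2) (fun z => p₂ z.1 z.2)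
        (fun z => hp₁nn z.1 z.2) (fun z => hp₂nn z.1 z.2)
        (by rw [Fintype.sum_prod_type]; exact hp₁tot)
        (by rw [Fintype.sum_prod_type]; exact hp₂tot) ht ht1
      rw [Fintype.sum_prod_type, Fintype.sum_prod_type, Fintype.sum_prod_type,
        Fintype.sum_prod_type] at hsc0
      have hsc : L pt + t*(1-t)/2 * aℓ^2 ≤ t * L p₁ + (1-t) * L p₂ := hsc0
      have hmul := mul_le_mul_of_nonneg_left hsc hη.le
      have hFpt : F pt = (∑ i, ∑ j, pt i j * W U₂ i j) + η * L pt := rfl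
      have key2 : t * (η*(1-t)/2 * aℓ^2) ≤ t * (F p₁ - F p₂) := by
        nlinarith [h1, hlin, hmul, hFp1, hFp2, hFpt]
      exact le_of_mul_le_mul_left key2 ht
    by_contra hcon
    push_neg at hcon
    have hFD : 0 ≤ F p₁ - F p₂ := by linarith [hminF p₁ (hmem U₁)]
    have ha2 : 0 < aℓ^2 := by
      rcases eq_or_lt_of_le (sq_nonneg aℓ) with h0 | h0
      · exfalso
        rw [← h0] at hcon
        simp at hcon
        linarith
      · exact h0
    set FD := F p₁ - F p₂ with hFDdef
    set t0 := (η/2*aℓ^2 - FD)/(η*aℓ^2) with ht0def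
    have hden : 0 < η*aℓ^2 := mul_pos hη ha2
    have ht0pos : 0 < t0 := div_pos (by simp only [hFDdef]; linarith) hden
    have ht0lt : t0 < 1 := by
      rw [ht0def, div_lt_one hden]
      linarith
    have hk := hkey t0 ht0pos ht0lt
    have he : η*(1-t0)/2*aℓ^2 = (η/2*aℓ^2 + FD)/2 := by
      have haℓne : aℓ ≠ 0 := fun h => by simp [h] at ha2
      rw [ht0def]
      field_simp
      ring
    rw [he] at hk
    linarith
  -- expressions for fη
  have hf₁ : fη U₁ = (∑ i, ∑ j, p₁ i j * W U₁ i j) + η * L p₁ - η := by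
    rw [hf U₁, htr p₁ U₁, hEnt p₁ (hmem U₁)]
    ring
  have hf₂ : fη U₂ = (∑ i, ∑ j, p₂ i j * W U₂ i j) + η * L p₂ - η := by
    rw [hf U₂, htr p₂ U₂, hEnt p₂ (hmem U₂)]
    ring
  -- combination identities
  have hcomb : ∀ p : Matrix (Fin n) (Fin n) ℝ,
      (∑ i, ∑ j, p i j * W U₁ i j)
        = (∑ i, ∑ j, p i j * W U₂ i j) + 2 * (∑ i, ∑ j, p i j * sd i j)
          + (∑ i, ∑ j, p i j * W Δ i j) := by
    intro p
    rw [Finset.mul_sum, ← Finset.sum_add_distrib, ← Finset.sum_add_distrib]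
    refine Finset.sum_congr rfl fun i _ => ?_
    rw [Finset.mul_sum, ← Finset.sum_add_distrib, ← Finset.sum_add_distrib]
    refine Finset.sum_congr rfl fun j _ => ?_
    rw [hsplit i j]
    ring
  -- upper bound
  have hupper : fη U₁ - fη U₂ - (2 * ∑ i, ∑ j, p₂ i j * sd i j) ≤ Cinf * S := by
    have h := hmin U₁ p₂ (hmem U₂)
    rw [htr p₁ U₁, htr p₂ U₁, hEnt p₁ (hmem U₁), hEnt p₂ (hmem U₂)] at h
    have hWDs : (∑ i, ∑ j, p₂ i j * W Δ i j) ≤ Cinf * S := by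
      calc (∑ i, ∑ j, p₂ i j * W Δ i j)
          ≤ ∑ i, ∑ j, p₂ i j * (Cinf * S) := by
            refine Finset.sum_le_sum fun i _ => Finset.sum_le_sum fun j _ => ?_
            exact mul_le_mul_of_nonneg_left (hWD i j) (hp₂nn i j)
        _ = (∑ i, ∑ j, p₂ i j) * (Cinf * S) := by
            rw [Finset.sum_mul]
            exact Finset.sum_congr rfl fun i _ => by rw [Finset.sum_mul]
        _ = Cinf * S := by rw [hp₂tot]; ring
    have hc2 := hcomb p₂
    rw [hf₁, hf₂]
    nlinarith [h, hc2, hWDs]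
  -- lower bound
  have hlower : -(2 * Cinf^2/η * S) ≤
      fη U₁ - fη U₂ - (2 * ∑ i, ∑ j, p₂ i j * sd i j) := by
    have hdiff : (∑ i, ∑ j, p₁ i j * sd i j) - (∑ i, ∑ j, p₂ i j * sd i j)
        = ∑ i, ∑ j, (p₁ i j - p₂ i j) * sd i j := by
      rw [← Finset.sum_sub_distrib]
      refine Finset.sum_congr rfl fun i _ => ?_
      rw [← Finset.sum_sub_distrib]
      exact Finset.sum_congr rfl fun j _ => by ring
    have hterm : ∀ (i j : Fin n), -(|p₁ i j - p₂ i j| * (Cinf * q)) ≤ (p₁ i j - p₂ i j) * sd i j := by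
      intro i j
      have h3 : |(p₁ i j - p₂ i j) * sd i j| ≤ |p₁ i j - p₂ i j| * (Cinf * q) := by
        rw [abs_mul]
        exact mul_le_mul_of_nonneg_left (hsd i j) (abs_nonneg _)
      linarith [neg_abs_le ((p₁ i j - p₂ i j) * sd i j)]
    have hsum : -(aℓ * (Cinf * q)) ≤ ∑ i, ∑ j, (p₁ i j - p₂ i j) * sd i j := by
      have e1 : ∑ i, ∑ j, -(|p₁ i j - p₂ i j| * (Cinf * q)) = -(aℓ * (Cinf * q)) := by
        rw [haℓdef, Finset.sum_mul]
        rw [← Finset.sum_neg_distrib]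
        refine Finset.sum_congr rfl fun i _ => ?_
        rw [Finset.sum_mul, ← Finset.sum_neg_distrib]
      rw [← e1]
      exact Finset.sum_le_sum fun i _ => Finset.sum_le_sum fun j _ => hterm i j
    have hWDpos : 0 ≤ ∑ i, ∑ j, p₁ i j * W Δ i j :=
      Finset.sum_nonneg fun i _ => Finset.sum_nonneg fun j _ =>
        mul_nonneg (hp₁nn i j) (hWnn Δ i j)
    have hc1 := hcomb p₁
    -- quadratic bound
    have hquad : -(2 * Cinf^2/η * S) ≤ -(2*(aℓ * (Cinf * q))) + η/2*aℓ^2 := by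
      have heq : η/2*aℓ^2 - 2*(aℓ*(Cinf*q)) + 2*Cinf^2*q^2/η = (η*aℓ - 2*Cinf*q)^2/(2*η) := by
        field_simp
        ring
      have hpos : 0 ≤ (η*aℓ - 2*Cinf*q)^2/(2*η) := by positivity
      have hS' : 2 * Cinf^2/η * S = 2*Cinf^2*q^2/η := by rw [hq2]; ring
      linarith [heq, hpos, hS']
    rw [hf₁, hf₂]
    nlinarith [hc1, hstrong, hsum, hWDpos, hquad, hFp1, hFp2, hdiff]
  rw [hgrad]
  rw [abs_le]
  constructor
  · refine le_trans ?_ hlower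
    nlinarith [mul_nonneg hC0 hS0]
  · refine le_trans hupper ?_
    have : 0 ≤ 2 * Cinf^2/η * S :=
      mul_nonneg (div_nonneg (by positivity) hη.le) hS0
    nlinarith [this]
end

section
/- Let f : ℝ^{d×k} → ℝ be ρ-weakly concave (i.e., f(·) - (ρ/2)‖·‖_F² is concave) with ρ = 2‖C‖_∞, and suppose every element of ∂f(U) has Frobenius norm at most 2‖C‖_∞ for U ∈ St(d,k). If U ∈ St(d,k) satisfies dist(0, subdiff f(U)) ≤ ε, and p(U) ∈ argmax_{Ū ∈ St(d,k)} {f(Ū) - 6‖C‖_∞‖Ū - U‖_F²}, then assuming the Riemannian subgradient inequality f(p(U)) - f(U) ≤ ⟨ξ, p(U) - U⟩ + 2‖C‖_∞‖p(U) - U‖_F² for ξ ∈ subdiff f(U), it follows that 12‖C‖_∞‖p(U) - U‖_F ≤ 3ε. -/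
open Finset Matrix

/-- If `f` is `2‖C‖_∞`-weakly concave with Riemannian subdifferential
`subdiff` bounded by `2‖C‖_∞`, `dist(0, subdiff f(U)) ≤ ε`, `p(U)` maximizes the proximal
objective over the Stiefel manifold, and the Riemannian subgradient inequality holds, then
`Θ(U) = 12‖C‖_∞‖p(U) - U‖_F ≤ 3ε`. -/
theorem near_stationarity_from_stationarity {d k : ℕ}
    (Cinf : ℝ) (hCpos : 0 < Cinf) (ε : ℝ) (hε : 0 ≤ ε)
    (f : Matrix (Fin d) (Fin k) ℝ → ℝ)
    (hweak : ConcaveOn ℝ Set.univ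
      (fun W : Matrix (Fin d) (Fin k) ℝ => f W - Cinf * ∑ a, ∑ b, (W a b) ^ 2))
    (U : Matrix (Fin d) (Fin k) ℝ) (hU : Uᵀ * U = 1)
    (subdiffU : Set (Matrix (Fin d) (Fin k) ℝ)) (hne : subdiffU.Nonempty)
    (hbdd : ∀ ξ ∈ subdiffU, Real.sqrt (∑ a, ∑ b, (ξ a b) ^ 2) ≤ 2 * Cinf)
    (hdist : sInf {t | ∃ ξ ∈ subdiffU, t = Real.sqrt (∑ a, ∑ b, (ξ a b) ^ 2)} ≤ ε)
    (pU : Matrix (Fin d) (Fin k) ℝ) (hpUSt : pUᵀ * pU = 1)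
    (hargmax : ∀ W : Matrix (Fin d) (Fin k) ℝ, Wᵀ * W = 1 →
      f W - 6 * Cinf * ∑ a, ∑ b, ((W - U) a b) ^ 2 ≤
        f pU - 6 * Cinf * ∑ a, ∑ b, ((pU - U) a b) ^ 2)
    (hsubgrad : ∀ ξ ∈ subdiffU,
      f pU - f U ≤ (∑ a, ∑ b, ξ a b * (pU - U) a b) +
        2 * Cinf * ∑ a, ∑ b, ((pU - U) a b) ^ 2) :
    12 * Cinf * Real.sqrt (∑ a, ∑ b, ((pU - U) a b) ^ 2) ≤ 3 * ε := by
  set s : ℝ := ∑ a, ∑ b, ((pU - U) a b) ^ 2 with hs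
  have hs0 : 0 ≤ s := Finset.sum_nonneg fun a _ =>
    Finset.sum_nonneg fun b _ => sq_nonneg _
  set r : ℝ := Real.sqrt s with hr
  have hr0 : 0 ≤ r := Real.sqrt_nonneg s
  have hrsq : r ^ 2 = s := Real.sq_sqrt hs0
  -- from argmax with W = U
  have hgap : 6 * Cinf * s ≤ f pU - f U := by
    have := hargmax U hU
    simp only [sub_self] at this
    have hz : (∑ a, ∑ b, ((0 : Matrix (Fin d) (Fin k) ℝ) a b) ^ 2) = 0 := by
      simp
    rw [hz] at this
    linarith
  -- key bound per subgradient
  have key : ∀ ξ ∈ subdiffU, 4 * Cinf * s ≤ Real.sqrt (∑ a, ∑ b, (ξ a b) ^ 2) * r := by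
    intro ξ hξ
    have hsg := hsubgrad ξ hξ
    have hcs : (∑ a, ∑ b, ξ a b * (pU - U) a b) ≤
        Real.sqrt (∑ a, ∑ b, (ξ a b) ^ 2) * r := by
      have h1 : (∑ a, ∑ b, ξ a b * (pU - U) a b) =
          ∑ p : Fin d × Fin k, ξ p.1 p.2 * (pU - U) p.1 p.2 := by
        rw [Fintype.sum_prod_type]
      have h2 : (∑ a, ∑ b, (ξ a b) ^ 2) = ∑ p : Fin d × Fin k, (ξ p.1 p.2) ^ 2 := by
        rw [Fintype.sum_prod_type]
      have h3 : s = ∑ p : Fin d × Fin k, ((pU - U) p.1 p.2) ^ 2 := by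
        rw [hs, Fintype.sum_prod_type]
      rw [h1, h2, hr, h3]
      exact Real.sum_mul_le_sqrt_mul_sqrt Finset.univ _ _
    linarith
  rcases eq_or_lt_of_le hr0 with hrz | hrpos
  · rw [← hrz]
    have : (0:ℝ) ≤ 3 * ε := by linarith
    simpa using this
  · -- 4 Cinf r is a lower bound of the set
    have hlb : 4 * Cinf * r ≤ sInf {t | ∃ ξ ∈ subdiffU, t = Real.sqrt (∑ a, ∑ b, (ξ a b) ^ 2)} := by
      apply le_csInf
      · obtain ⟨ξ, hξ⟩ := hne
        exact ⟨_, ξ, hξ, rfl⟩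
      · rintro t ⟨ξ, hξ, rfl⟩
        have h := key ξ hξ
        have : 4 * Cinf * r * r ≤ Real.sqrt (∑ a, ∑ b, (ξ a b) ^ 2) * r := by
          calc 4 * Cinf * r * r = 4 * Cinf * s := by rw [← hrsq]; ring
          _ ≤ _ := h
        exact le_of_mul_le_mul_right this hrpos
    have : 4 * Cinf * r ≤ ε := le_trans hlb hdist
    linarith
end
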